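/- If s : ℝⁿ × ℝ → ℝ is twice continuously differentiable and satisfies the Hamilton–Jacobi equation ∂s/∂t + ½‖∇s‖² = c for a constant c at all points, then any curve X : ℝ → ℝⁿ satisfying Ẋ(t) = ∇s(X(t), t) has zero acceleration: Ẍ(t) = 0 for all t. -/

import Mathlib

/-!
Write `p = (x, t)`. Differentiating the Hamilton–Jacobi equation
`∂ₜs + ½‖∇s‖² = c` in any direction `w` of space-time gives
`D²s(p)(w, V p) = 0` for the characteristic field `V = (∇s, 1)`, and by symmetry of the
second derivative `D²s(p)(V p) = 0`. The curve `t ↦ (X t, t)` has velocity `V`, so by the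
chain rule the whole differential `Ds` is constant along it; in particular so is `∇s`.
-/

open InnerProductSpace

theorem deriv_eq_fderiv_apply_zero_one {F G : Type*} [NormedAddCommGroup F] [NormedSpace ℝ F]
    [NormedAddCommGroup G] [NormedSpace ℝ G] {f : F × ℝ → G} {x : F} {t : ℝ}
    (hf : DifferentiableAt ℝ f (x, t)) :
    deriv (fun τ => f (x, τ)) t = fderiv ℝ f (x, t) (0, 1) :=
  (hf.hasFDerivAt.comp_hasDerivAt t
    ((hasDerivAt_const t x).prodMk (hasDerivAt_id t))).deriv

variable {E : Type*} [NormedAddCommGroup E] [InnerProductSpace ℝ E] [CompleteSpace E]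

noncomputable def spatialGradient : ((E × ℝ) →L[ℝ] ℝ) →L[ℝ] E :=
  (toDual ℝ E).symm.toContinuousLinearEquiv.toContinuousLinearMap.comp
    ((ContinuousLinearMap.compL ℝ E (E × ℝ) ℝ).flip (ContinuousLinearMap.inl ℝ E ℝ))

theorem inner_spatialGradient (L : (E × ℝ) →L[ℝ] ℝ) (u : E) :
    ⟪spatialGradient L, u⟫_ℝ = L (u, 0) := by
  simp [spatialGradient, toDual_symm_apply]

theorem gradient_eq_spatialGradient {f : E × ℝ → ℝ} {x : E} {t : ℝ}
    (hf : DifferentiableAt ℝ f (x, t)) :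
    gradient (fun y => f (y, t)) x = spatialGradient (fderiv ℝ f (x, t)) := by
  have hslice : HasFDerivAt (fun y => f (y, t))
      ((fderiv ℝ f (x, t)).comp (ContinuousLinearMap.inl ℝ E ℝ)) x :=
    hf.hasFDerivAt.comp x ((hasFDerivAt_id x).prodMk (hasFDerivAt_const t x))
  rw [gradient, hslice.fderiv]
  rfl

section HamiltonJacobi

variable {f : E × ℝ → ℝ} {c : ℝ}

theorem fderiv_fderiv_apply_characteristic_eq_zero (hf : ContDiff ℝ 2 f)
    (hHJ : ∀ p, fderiv ℝ f p (0, 1) + 1 / 2 * ‖spatialGradient (fderiv ℝ f p)‖ ^ 2 = c)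
    (p : E × ℝ) :
    fderiv ℝ (fderiv ℝ f) p (spatialGradient (fderiv ℝ f p), 1) = 0 := by
  have hD : HasFDerivAt (fderiv ℝ f) (fderiv ℝ (fderiv ℝ f) p) p :=
    ((hf.fderiv_right le_rfl).differentiable one_ne_zero p).hasFDerivAt
  have hHJ_deriv : HasFDerivAt
      (fun q => fderiv ℝ f q (0, 1) + 1 / 2 * ‖spatialGradient (fderiv ℝ f q)‖ ^ 2)
      ((ContinuousLinearMap.apply ℝ ℝ ((0 : E), (1 : ℝ))).comp (fderiv ℝ (fderiv ℝ f) p)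
        + (1 / 2 : ℝ) • (2 • (innerSL ℝ (spatialGradient (fderiv ℝ f p))).comp
          (spatialGradient.comp (fderiv ℝ (fderiv ℝ f) p)))) p :=
    (HasFDerivAt.comp (F := (E × ℝ) →L[ℝ] ℝ) p
      (ContinuousLinearMap.apply ℝ ℝ ((0 : E), (1 : ℝ))).hasFDerivAt hD).add
      ((HasFDerivAt.comp (F := (E × ℝ) →L[ℝ] ℝ) p
        (spatialGradient (E := E)).hasFDerivAt hD).norm_sq.const_mul (1 / 2 : ℝ))
  have hHJ_const : HasFDerivAt
      (fun q => fderiv ℝ f q (0, 1) + 1 / 2 * ‖spatialGradient (fderiv ℝ f q)‖ ^ 2)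
      (0 : (E × ℝ) →L[ℝ] ℝ) p := by
    rw [funext hHJ]
    exact hasFDerivAt_const c p
  refine ContinuousLinearMap.ext fun w => ?_
  have hw := congrArg (· w) (hHJ_deriv.unique hHJ_const)
  simp only [add_apply, ContinuousLinearMap.comp_apply, smul_apply, innerSL_apply_apply,
    ContinuousLinearMap.apply_apply, zero_apply, smul_eq_mul, nsmul_eq_mul] at hw
  rw [real_inner_comm, inner_spatialGradient] at hw
  have hsplit : (spatialGradient (fderiv ℝ f p), (1 : ℝ)) =
      (spatialGradient (fderiv ℝ f p), 0) + (0, 1) := by simp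
  rw [zero_apply, ← (hf.contDiffAt.isSymmSndFDerivAt (by simp)) w, hsplit, map_add]
  linarith

theorem hasDerivAt_fderiv_along_characteristic (hf : ContDiff ℝ 2 f)
    (hHJ : ∀ p, fderiv ℝ f p (0, 1) + 1 / 2 * ‖spatialGradient (fderiv ℝ f p)‖ ^ 2 = c)
    {X : ℝ → E} {t : ℝ} (hX : HasDerivAt X (spatialGradient (fderiv ℝ f (X t, t))) t) :
    HasDerivAt (fun τ => fderiv ℝ f (X τ, τ)) 0 t := by
  have hD : HasFDerivAt (fderiv ℝ f) (fderiv ℝ (fderiv ℝ f) (X t, t)) (X t, t) :=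
    ((hf.fderiv_right le_rfl).differentiable one_ne_zero _).hasFDerivAt
  have h := hD.comp_hasDerivAt (E := (E × ℝ) →L[ℝ] ℝ) t (hX.prodMk (hasDerivAt_id' t))
  rw [fderiv_fderiv_apply_characteristic_eq_zero hf hHJ] at h
  exact h

end HamiltonJacobi

/-- If `s : ℝⁿ × ℝ → ℝ` is C² and satisfies the Hamilton–Jacobi equation
`∂s/∂t + ½‖∇s‖² = c` for a constant `c`, then any curve `X` with
`Ẋ(t) = ∇s(X(t), t)` has zero acceleration: `Ẍ(t) = 0` for all `t`. -/
theorem zero_acceleration_of_hamilton_jacobi {n : ℕ}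
    (s : EuclideanSpace ℝ (Fin n) → ℝ → ℝ) (c : ℝ)
    (hs : ContDiff ℝ 2 (fun p : EuclideanSpace ℝ (Fin n) × ℝ => s p.1 p.2))
    (hHJ : ∀ (x : EuclideanSpace ℝ (Fin n)) (t : ℝ),
      deriv (fun τ => s x τ) t
        + (1 / 2) * ‖gradient (fun y => s y t) x‖ ^ 2 = c)
    (X : ℝ → EuclideanSpace ℝ (Fin n))
    (hX : ∀ t, HasDerivAt X (gradient (fun y => s y t) (X t)) t) :
    ∀ t, HasDerivAt (fun τ => gradient (fun y => s y τ) (X τ))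
      (0 : EuclideanSpace ℝ (Fin n)) t := by
  set f := fun p : EuclideanSpace ℝ (Fin n) × ℝ => s p.1 p.2
  have hf : Differentiable ℝ f := hs.differentiable two_ne_zero
  have hgrad (x : EuclideanSpace ℝ (Fin n)) (t : ℝ) :
      gradient (fun y => s y t) x = spatialGradient (fderiv ℝ f (x, t)) :=
    gradient_eq_spatialGradient (hf _)
  have hHJf (p : EuclideanSpace ℝ (Fin n) × ℝ) :
      fderiv ℝ f p (0, 1) + 1 / 2 * ‖spatialGradient (fderiv ℝ f p)‖ ^ 2 = c := by
    rw [← deriv_eq_fderiv_apply_zero_one (hf _), ← hgrad]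
    exact hHJ p.1 p.2
  intro t
  simp only [hgrad] at hX ⊢
  have hconserved := hasDerivAt_fderiv_along_characteristic hs hHJf (hX t)
  have h := spatialGradient.hasFDerivAt.comp_hasDerivAt t hconserved
  rw [map_zero] at h
  exact h
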